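/- Let A be a finite alphabet, u ∈ A^ℕ an infinite word, and φ: A* → A* a morphism in Class P_ret with marker w such that the last letters of the words φ(c), c ∈ A, are not all equal and the map sending each letter c to the last letter of φ(c) is injective. Let a, b ∈ A with b equal to the last letter of φ(a). Then: (1) for every occurrence i of the word wb in φ(u), the block of φ(u) of length |φ(a)w| starting at position i equals φ(a)w; and (2) for every occurrence i of the word bw in φ(u), one has i + 1 + |w| ≥ |φ(a)w| and the block of φ(u) of length |φ(a)w| starting at position i + 1 + |w| − |φ(a)w| equals φ(a)w. -/

import Mathlib

open List

/-- Apply a morphism (given by its values on letters) to a finite word. -/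
def applyM {A : Type*} (φ : A → List A) (v : List A) : List A := v.flatMap φ

/-- The set of occurrences of `w` as a factor of `u`:
indices `i` such that the block of `u` of length `|w|` starting at `i` equals `w`. -/
def occs {A : Type*} [DecidableEq A] (w u : List A) : Finset ℕ :=
  (Finset.range (u.length + 1)).filter
    (fun i => i + w.length ≤ u.length ∧ (u.drop i).take w.length = w)

/-- A morphism `φ` belongs to Class `P_ret` with marker `w` if it is injective on
letters, `w` is a palindrome, and for each letter `a` the word `φ(a)w` is a palindrome
in which `w` occurs exactly twice, namely as a prefix (position `0`) and as a suffix
(position `|φ(a)|`, distinct from `0`). -/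
def IsPretWithMarker {A : Type*} [DecidableEq A] (φ : A → List A) (w : List A) : Prop :=
  Function.Injective φ ∧ w.reverse = w ∧
    ∀ a : A, (φ a ++ w).reverse = φ a ++ w ∧
      occs w (φ a ++ w) = {0, (φ a).length} ∧ (φ a).length ≠ 0

/-- The block of length `len` of the infinite word `u` starting at position `i`. -/
def factorAt {A : Type*} (u : ℕ → A) (i len : ℕ) : List A :=
  (List.range len).map fun k => u (i + k)

/-- `i` is an occurrence of the finite word `v` in the infinite word `u`. -/
def OccursAt {A : Type*} (u : ℕ → A) (v : List A) (i : ℕ) : Prop :=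
  factorAt u i v.length = v

/-- `v` belongs to the language of the infinite word `u`, i.e. `v` is a factor of `u`. -/
def InLang {A : Type*} (u : ℕ → A) (v : List A) : Prop := ∃ i, OccursAt u v i

/-- The image `φ(u) = φ(u₀)φ(u₁)φ(u₂)⋯` of an infinite word `u` under a
(non-erasing) morphism `φ`, as an infinite word. -/
def applyInf {A : Type*} (φ : A → List A) (u : ℕ → A) (n : ℕ) : A :=
  (((List.range (n + 1)).flatMap fun i => φ (u i))).getD n (u 0)

/-- The language of `u` is closed under reversal. -/
def ClosedUnderReversal {A : Type*} (u : ℕ → A) : Prop :=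
  ∀ v : List A, InLang u v → InLang u v.reverse

/-- A finite word is rich if its number of palindromic factors (including `ε`)
equals its length plus one. -/
def RichWord {A : Type*} (u : List A) : Prop :=
  {p : List A | p <:+: u ∧ p.reverse = p}.ncard = u.length + 1

/-- An infinite word is rich if all its finite prefixes are rich. -/
def RichInf {A : Type*} (u : ℕ → A) : Prop := ∀ n : ℕ, RichWord (factorAt u 0 n)

/-- An infinite word is recurrent if each of its factors occurs infinitely often. -/
def Recurrent {A : Type*} (u : ℕ → A) : Prop :=
  ∀ v : List A, InLang u v → ∀ N : ℕ, ∃ i, N ≤ i ∧ OccursAt u v i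

/-- `r` is a return word to `w` in the infinite word `u`: `wr ∈ L(u)` and `w`
occurs in `wr` exactly twice, as a prefix and as a suffix. -/
def IsReturnWord {A : Type*} [DecidableEq A] (u : ℕ → A) (w r : List A) : Prop :=
  r ≠ [] ∧ InLang u (w ++ r) ∧ occs w (w ++ r) = {0, r.length}

/-- Left extensions of `x` in the language of `u`. -/
def leftExt {A : Type*} (u : ℕ → A) (x : List A) : Set A := {a | InLang u (a :: x)}

/-- Right extensions of `x` in the language of `u`. -/
def rightExt {A : Type*} (u : ℕ → A) (x : List A) : Set A := {b | InLang u (x ++ [b])}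

/-- Bi-extensions of `x` in the language of `u`. -/
def biExt {A : Type*} (u : ℕ → A) (x : List A) : Set (A × A) :=
  {p | InLang u (p.1 :: (x ++ [p.2]))}

/-- `x` is bispecial in `u`. -/
def Bispecial {A : Type*} (u : ℕ → A) (x : List A) : Prop :=
  2 ≤ (leftExt u x).ncard ∧ 2 ≤ (rightExt u x).ncard

/-- The bilateral order `b_u(x) = #B_u(x) − #L_u(x) − #R_u(x) + 1`. -/
noncomputable def bilateralOrder {A : Type*} (u : ℕ → A) (x : List A) : ℤ :=
  ((biExt u x).ncard : ℤ) - (leftExt u x).ncard - (rightExt u x).ncard + 1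

/-- The number of palindromic extensions of `x` in `u`. -/
noncomputable def pext {A : Type*} (u : ℕ → A) (x : List A) : ℕ :=
  {a | InLang u (a :: (x ++ [a]))}.ncard

/-- Arnoux-Rauzy morphisms: the monoid of morphisms generated by permutations of the
alphabet and by the elementary morphisms `ψ_a : a ↦ a, b ↦ ab` and `ψ̄_a : a ↦ a, b ↦ ba`. -/
inductive IsAR {A : Type*} [DecidableEq A] : (A → List A) → Prop
  | perm (π : Equiv.Perm A) : IsAR (fun a => [π a])
  | psiL (a : A) : IsAR (fun b => if b = a then [a] else [a, b])
  | psiR (a : A) : IsAR (fun b => if b = a then [a] else [b, a])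
  | comp {φ ψ : A → List A} : IsAR φ → IsAR ψ → IsAR (fun a => applyM φ (ψ a))

/-- The `k`-th power `φ^k` of a morphism. -/
def powM {A : Type*} (φ : A → List A) : ℕ → A → List A
  | 0, a => [a]
  | n + 1, a => applyM (powM φ n) (φ a)

/-- A morphism is primitive if some power of it maps every letter to a word
containing every letter. -/
def PrimitiveM {A : Type*} (φ : A → List A) : Prop :=
  ∃ k : ℕ, ∀ a b : A, b ∈ powM φ k a

/-- A (acyclic) morphism is marked: it has a rightmost conjugate `φR` whose
last-letter map is injective, and a leftmost conjugate `φL` whose first-letter map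
is injective. -/
def Marked {A : Type*} (φ : A → List A) : Prop :=
  ∃ (φR φL : A → List A) (x y : List A),
    (∀ a, φ a ++ x = x ++ φR a) ∧
    (∀ a, φL a ++ y = y ++ φ a) ∧
    (∃ a b : A, (φR a).getLast? ≠ (φR b).getLast?) ∧
    (∃ a b : A, (φL a).head? ≠ (φL b).head?) ∧
    Function.Injective (fun c => (φR c).getLast?) ∧
    Function.Injective (fun c => (φL c).head?)

/-!
The word `φ(u)` is the concatenation of the blocks `φ(u k)`, the `k`-th one starting at
`imageStart φ u k`. Since `w` is a prefix of every `φ(c) w`, each block is followed by `w`, so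
`φ(u k) w` occurs at the start of the `k`-th block; as `w` occurs in `φ(c) w` only at `0` and
`|φ(c)|`, every occurrence of `w` in `φ(u)` starts at a block boundary. In the palindrome `φ(c) w`
the letter following the prefix `w` mirrors the last letter `ρ c` of `φ(c)`. Hence an occurrence
of `w b` (resp. `b w`) sits at the start (resp. the end) of a block `φ(c)` with `ρ c = b`, and
injectivity of `ρ` forces `c = a`.
-/

section

variable {A : Type*}

theorem exists_le_and_lt_succ {f : ℕ → ℕ} {i n : ℕ} (h0 : f 0 ≤ i) (hn : i < f n) :
    ∃ k, f k ≤ i ∧ i < f (k + 1) := by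
  classical
  have hex : ∃ n, i < f n := ⟨n, hn⟩
  obtain ⟨k, hk⟩ : ∃ k, Nat.find hex = k + 1 :=
    Nat.exists_eq_succ_of_ne_zero fun h => (Nat.find_spec hex).not_ge (h ▸ h0)
  exact ⟨k, not_lt.1 (Nat.find_min hex (by omega)), hk ▸ Nat.find_spec hex⟩

theorem getElem?_length_eq_getLast?_of_reverse_eq {x w : List A} (hx : x ≠ [])
    (hpal : (x ++ w).reverse = x ++ w) : (x ++ w)[w.length]? = x.getLast? := by
  have hlen : 0 < x.length := length_pos_iff.2 hx
  rw [← hpal, getElem?_reverse (by simp; omega), getLast?_eq_getElem?, getElem?_append_left]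
  · congr 1; simp; omega
  · simp; omega

theorem getElem?_length_sub_one_append {x : List A} (hx : x ≠ []) (w : List A) :
    (x ++ w)[x.length - 1]? = x.getLast? := by
  have hlen : 0 < x.length := length_pos_iff.2 hx
  rw [getElem?_append_left (by omega), getLast?_eq_getElem?]

theorem prefix_of_zero_mem_occs [DecidableEq A] {w v : List A} (h : 0 ∈ occs w v) : w <+: v := by
  simp only [occs, Finset.mem_filter, drop_zero] at h
  exact prefix_iff_eq_take.2 h.2.2.symm

section InfiniteWord

variable {U : ℕ → A}

theorem factorAt_add (U : ℕ → A) (i m n : ℕ) :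
    factorAt U i (m + n) = factorAt U i m ++ factorAt U (i + m) n := by
  simp [factorAt, range_add, Nat.add_assoc]

theorem occursAt_append_iff {v v' : List A} {i : ℕ} :
    OccursAt U (v ++ v') i ↔ OccursAt U v i ∧ OccursAt U v' (i + v.length) := by
  unfold OccursAt
  rw [length_append, factorAt_add]
  exact ⟨fun h => append_inj h (by simp [factorAt]), fun h => by rw [h.1, h.2]⟩

theorem occursAt_singleton_iff {c : A} {i : ℕ} : OccursAt U [c] i ↔ U i = c := by
  simp [OccursAt, factorAt]

theorem OccursAt.apply_eq {v : List A} {i d : ℕ} (h : OccursAt U v i) (hd : d < v.length) :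
    U (i + d) = v[d] := by
  have := congrArg (·[d]?) h
  simp_all [factorAt]

theorem OccursAt.getElem?_eq {v : List A} {i d : ℕ} (h : OccursAt U v i) (hd : d < v.length) :
    v[d]? = some (U (i + d)) := by
  rw [h.apply_eq hd, getElem?_eq_getElem]

theorem OccursAt.factorAt_eq {v : List A} {i d n : ℕ} (h : OccursAt U v i)
    (hle : d + n ≤ v.length) : factorAt U (i + d) n = (v.drop d).take n := by
  apply ext_getElem
  · simp [factorAt]; omega
  · intro k hk _
    simp only [factorAt, getElem_map, getElem_range, getElem_take, getElem_drop] at hk ⊢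
    rw [← h.apply_eq (by simp at hk; omega), Nat.add_assoc]

end InfiniteWord

section Image

variable (φ : A → List A) (u : ℕ → A)

def imageStart (k : ℕ) : ℕ := (applyM φ (factorAt u 0 k)).length

theorem applyM_factorAt_add (i m n : ℕ) :
    applyM φ (factorAt u i (m + n)) =
      applyM φ (factorAt u i m) ++ applyM φ (factorAt u (i + m) n) := by
  rw [factorAt_add, applyM, flatMap_append]; rfl

theorem applyM_factorAt_one (i : ℕ) : applyM φ (factorAt u i 1) = φ (u i) := by
  simp [applyM, factorAt]

theorem applyM_factorAt_succ (i n : ℕ) :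
    applyM φ (factorAt u i (n + 1)) = applyM φ (factorAt u i n) ++ φ (u (i + n)) := by
  rw [applyM_factorAt_add, applyM_factorAt_one]

theorem imageStart_zero : imageStart φ u 0 = 0 := by
  simp [imageStart, applyM, factorAt]

theorem imageStart_succ (k : ℕ) :
    imageStart φ u (k + 1) = imageStart φ u k + (φ (u k)).length := by
  simp [imageStart, applyM_factorAt_succ]

variable {φ} (hφ : ∀ c, φ c ≠ [])
include hφ

theorem le_length_applyM_factorAt (i n : ℕ) : n ≤ (applyM φ (factorAt u i n)).length := by
  induction n with
  | zero => simp
  | succ n ih =>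
    rw [applyM_factorAt_succ, length_append]
    have := length_pos_iff.2 (hφ (u (i + n)))
    omega

theorem applyInf_eq_getElem {n m : ℕ} (hn : n < (applyM φ (factorAt u 0 m)).length) :
    applyInf φ u n = (applyM φ (factorAt u 0 m))[n] := by
  have hprefix : ∀ {m m'}, m ≤ m' → applyM φ (factorAt u 0 m) <+: applyM φ (factorAt u 0 m') :=
    fun {m m'} h => ⟨_, by rw [← applyM_factorAt_add, Nat.add_sub_cancel' h]⟩
  have hlen : n < (applyM φ (factorAt u 0 (n + 1))).length :=
    le_length_applyM_factorAt u hφ 0 (n + 1)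
  have happ : applyInf φ u n = (applyM φ (factorAt u 0 (n + 1)))[n] := by
    have hL : (range (n + 1)).flatMap (fun i => φ (u i)) = applyM φ (factorAt u 0 (n + 1)) := by
      simp [applyM, factorAt, flatMap_map]
    rw [applyInf, hL, getD_eq_getElem _ _ hlen]
  rw [happ]
  rcases le_total (n + 1) m with hm | hm
  · exact (hprefix hm).getElem hlen
  · exact ((hprefix hm).getElem hn).symm

theorem occursAt_applyInf_of_eq_append {m : ℕ} {x v y : List A}
    (h : applyM φ (factorAt u 0 m) = x ++ v ++ y) : OccursAt (applyInf φ u) v x.length := by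
  apply ext_getElem (by simp [factorAt])
  intro k _ hk
  simp only [factorAt, getElem_map, getElem_range]
  rw [applyInf_eq_getElem u hφ (m := m) (by simp [h]; omega)]
  simp only [h, append_assoc, getElem_append_right (Nat.le_add_right _ _), Nat.add_sub_cancel_left]
  exact getElem_append_left hk

section Marker

variable {w : List A} (hw : ∀ c, w <+: φ c ++ w)
include hw

omit hφ in
theorem prefix_applyM_append (x : List A) : w <+: applyM φ x ++ w := by
  induction x with
  | nil => simp [applyM]
  | cons c x ih =>
    obtain ⟨t, ht⟩ := ih
    rw [applyM, flatMap_cons, ← applyM, append_assoc, ← ht, ← append_assoc]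
    exact (hw c).trans (prefix_append _ _)

theorem occursAt_applyInf_imageStart (k : ℕ) :
    OccursAt (applyInf φ u) (φ (u k) ++ w) (imageStart φ u k) := by
  obtain ⟨t, ht⟩ : w <+: applyM φ (factorAt u (k + 1) w.length) :=
    prefix_of_prefix_length_le (prefix_applyM_append hw _) (prefix_append _ _)
      (le_length_applyM_factorAt u hφ _ _)
  apply occursAt_applyInf_of_eq_append u hφ (m := k + 1 + w.length) (y := t)
  rw [applyM_factorAt_add, applyM_factorAt_succ, Nat.zero_add, Nat.zero_add, ← ht]
  simp

theorem exists_imageStart_eq_of_occursAt [DecidableEq A]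
    (hocc : ∀ c, occs w (φ c ++ w) = {0, (φ c).length}) {i : ℕ}
    (h : OccursAt (applyInf φ u) w i) : ∃ k, imageStart φ u k = i := by
  obtain ⟨k, hki, hik⟩ := exists_le_and_lt_succ (f := imageStart φ u) (by simp [imageStart_zero])
    (Nat.lt_of_lt_of_le (Nat.lt_succ_self i) (le_length_applyM_factorAt u hφ 0 (i + 1)))
  rw [imageStart_succ] at hik
  obtain ⟨d, rfl⟩ := Nat.exists_eq_add_of_le hki
  have hd : d ∈ occs w (φ (u k) ++ w) := by
    have := (occursAt_applyInf_imageStart u hφ hw k).factorAt_eq (d := d) (n := w.length)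
      (by simp; omega)
    simp only [occs, Finset.mem_filter, Finset.mem_range, length_append]
    exact ⟨by omega, by omega, this ▸ h⟩
  rw [hocc, Finset.mem_insert, Finset.mem_singleton] at hd
  exact ⟨k, by omega⟩

end Marker

end Image

end

theorem pret_marked_occurrences_general {A : Type*} [DecidableEq A]
    (φ : A → List A) (w : List A) (ρ : A → A) (h : IsPretWithMarker φ w)
    (hρ : ∀ c : A, (φ c).getLast? = some (ρ c))
    (hinj : Function.Injective ρ)
    (u : ℕ → A) (a b : A) (hb : b = ρ a) :
    (∀ i : ℕ, OccursAt (applyInf φ u) (w ++ [b]) i →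
        OccursAt (applyInf φ u) (φ a ++ w) i) ∧
    (∀ i : ℕ, OccursAt (applyInf φ u) (b :: w) i →
        (φ a ++ w).length ≤ i + 1 + w.length ∧
        OccursAt (applyInf φ u) (φ a ++ w) (i + 1 + w.length - (φ a ++ w).length)) := by
  obtain ⟨-, -, hP⟩ := h
  have hφ c : φ c ≠ [] := fun hc => (hP c).2.2 (by simp [hc])
  have hocc c := (hP c).2.1
  have hw c : w <+: φ c ++ w := prefix_of_zero_mem_occs (by simp [hocc])
  have hblock := occursAt_applyInf_imageStart u hφ hw
  subst hb
  refine ⟨fun i hi => ?_, fun i hi => ?_⟩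
  · obtain ⟨hwi, hbi⟩ := occursAt_append_iff.1 hi
    obtain ⟨k, rfl⟩ := exists_imageStart_eq_of_occursAt u hφ hw hocc hwi
    have hρk : some (ρ (u k)) = some (ρ a) := by
      rw [← hρ, ← getElem?_length_eq_getLast?_of_reverse_eq (hφ _) (hP _).1,
        (hblock k).getElem?_eq (by simp [length_pos_iff.2 (hφ _)]), occursAt_singleton_iff.1 hbi]
    rw [← hinj (Option.some_injective _ hρk)]
    exact hblock k
  · obtain ⟨hbi, hwi⟩ := occursAt_append_iff.1 (show OccursAt _ ([ρ a] ++ w) i from hi)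
    obtain ⟨k, hk⟩ := exists_imageStart_eq_of_occursAt u hφ hw hocc hwi
    obtain ⟨k, rfl⟩ : ∃ k', k = k' + 1 :=
      Nat.exists_eq_succ_of_ne_zero (by rintro rfl; simp [imageStart_zero] at hk)
    rw [imageStart_succ, length_singleton] at hk
    have hlen := length_pos_iff.2 (hφ (u k))
    have hρk : some (ρ (u k)) = some (ρ a) := by
      rw [← hρ, ← getElem?_length_sub_one_append (hφ _) w, (hblock k).getElem?_eq (by simp; omega),
        ← occursAt_singleton_iff.1 hbi]
      congr 2; omega
    rw [← hinj (Option.some_injective _ hρk), length_append]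
    exact ⟨by omega, by convert hblock k using 2; omega⟩

/-- Let `φ ∈ P_ret` be marked with marker `w`, equal to its rightmost
conjugate, `ρ` the (injective) last-letter map, and `b = ρ(a)`. Then `wb` occurs in
`φ(u)` only as a prefix of `φ(a)w`, and `bw` occurs in `φ(u)` only as a suffix of
`φ(a)w`. -/
theorem pret_marked_occurrences {A : Type*} [Fintype A] [DecidableEq A]
    (φ : A → List A) (w : List A) (ρ : A → A) (h : IsPretWithMarker φ w)
    (hρ : ∀ c : A, (φ c).getLast? = some (ρ c))
    (hne : ∃ c d : A, ρ c ≠ ρ d)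
    (hinj : Function.Injective ρ)
    (u : ℕ → A) (a b : A) (hb : b = ρ a) :
    (∀ i : ℕ, OccursAt (applyInf φ u) (w ++ [b]) i →
        OccursAt (applyInf φ u) (φ a ++ w) i) ∧
    (∀ i : ℕ, OccursAt (applyInf φ u) (b :: w) i →
        (φ a ++ w).length ≤ i + 1 + w.length ∧
        OccursAt (applyInf φ u) (φ a ++ w) (i + 1 + w.length - (φ a ++ w).length)) :=
  pret_marked_occurrences_general φ w ρ h hρ hinj u a b hb
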